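/- Let X = ℝ₊ be the positive reals and let R : X³ → X³ be the map R(s₁,s₂,s₃) = ( s₁·s₂/(s₁+s₃), s₁+s₃, s₂·s₃/(s₁+s₃) ). Then R satisfies the functional tetrahedron equation, R is an involution (R ∘ R = Id), and R is reversible (τ₁₃ ∘ R ∘ τ₁₃ ∘ R = Id, where τ₁₃(x,y,z) = (z,y,x)). -/

import Mathlib

/-- Apply `R` to components 1, 2, 3 of a 6-tuple. -/
def map123 {X : Type*} (R : X × X × X → X × X × X) :
    X × X × X × X × X × X → X × X × X × X × X × X :=
  fun (x1, x2, x3, x4, x5, x6) =>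
    ((R (x1, x2, x3)).1, (R (x1, x2, x3)).2.1, (R (x1, x2, x3)).2.2, x4, x5, x6)

/-- Apply `R` to components 1, 4, 5 of a 6-tuple. -/
def map145 {X : Type*} (R : X × X × X → X × X × X) :
    X × X × X × X × X × X → X × X × X × X × X × X :=
  fun (x1, x2, x3, x4, x5, x6) =>
    ((R (x1, x4, x5)).1, x2, x3, (R (x1, x4, x5)).2.1, (R (x1, x4, x5)).2.2, x6)

/-- Apply `R` to components 2, 4, 6 of a 6-tuple. -/
def map246 {X : Type*} (R : X × X × X → X × X × X) :
    X × X × X × X × X × X → X × X × X × X × X × X :=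
  fun (x1, x2, x3, x4, x5, x6) =>
    (x1, (R (x2, x4, x6)).1, x3, (R (x2, x4, x6)).2.1, x5, (R (x2, x4, x6)).2.2)

/-- Apply `R` to components 3, 5, 6 of a 6-tuple. -/
def map356 {X : Type*} (R : X × X × X → X × X × X) :
    X × X × X × X × X × X → X × X × X × X × X × X :=
  fun (x1, x2, x3, x4, x5, x6) =>
    (x1, x2, (R (x3, x5, x6)).1, x4, (R (x3, x5, x6)).2.1, (R (x3, x5, x6)).2.2)

/-- The functional tetrahedron equation. -/
def IsTetrahedron {X : Type*} (R : X × X × X → X × X × X) : Prop :=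
  map123 R ∘ map145 R ∘ map246 R ∘ map356 R =
    map356 R ∘ map246 R ∘ map145 R ∘ map123 R

/-- The positive real numbers. -/
abbrev PReal : Type := {x : ℝ // 0 < x}

/-- The permutation of the first and third components of a triple. -/
def tau13 {X : Type*} : X × X × X → X × X × X := fun (x, y, z) => (z, y, x)

/-- The tetrahedron map obtained from the semi-invariants of AKP, on positive reals. -/
noncomputable def semiAKP : PReal × PReal × PReal → PReal × PReal × PReal :=
  fun (⟨s1, hs1⟩, ⟨s2, hs2⟩, ⟨s3, hs3⟩) =>
    (⟨s1 * s2 / (s1 + s3), by positivity⟩,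
     ⟨s1 + s3, by positivity⟩,
     ⟨s2 * s3 / (s1 + s3), by positivity⟩)

set_option maxHeartbeats 2000000 in
/-- `semiAKP` satisfies the functional tetrahedron equation, is an involution,
and is reversible. -/
theorem semiAKP_tetrahedron_involution_reversible :
    IsTetrahedron semiAKP ∧ (semiAKP ∘ semiAKP = id) ∧
    (tau13 ∘ semiAKP ∘ tau13 ∘ semiAKP = id) := by
  refine ⟨?_, ?_, ?_⟩
  · funext ⟨⟨a,ha⟩,⟨b,hb⟩,⟨c,hc⟩,⟨d,hd⟩,⟨e,he⟩,⟨f,hf⟩⟩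
    simp only [Function.comp, map123, map145, map246, map356, semiAKP, Prod.mk.injEq,
      Subtype.mk.injEq]
    have h1 : a + c ≠ 0 := by positivity
    have h2 : a + e ≠ 0 := by positivity
    have h3 : b + f ≠ 0 := by positivity
    have h4 : c + f ≠ 0 := by positivity
    have h5 : d + f ≠ 0 := by positivity
    refine ⟨?_, ?_, ?_, ?_, ?_, ?_⟩
    have h9 : a + c + f ≠ 0 := by positivity
    have hn1 : b * (c + f) + e * f ≠ 0 := by positivity
    have hn2 : a * (b * (c + f) + e * f) + c * e * (a + c + f) ≠ 0 := by positivity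
    have hn3 : a * b + e * (a + c) ≠ 0 := by positivity
    have hn4 : b * c * (a + c + f) + (a * b + e * (a + c)) * f ≠ 0 := by positivity
    have e3 : a * b / (a + c) + e = (a * b + e * (a + c)) / (a + c) := by
      field_simp
    have e2 : a * (b + e * f / (c + f)) / (a + (c + f)) + c * e / (c + f) =
        (a * (b * (c + f) + e * f) + c * e * (a + c + f)) / ((a + c + f) * (c + f)) := by
      field_simp
      ring
    have e4 : b * c / (a + c) + (a * b / (a + c) + e) * f / (a + c + f) =
        (b * c * (a + c + f) + (a * b + e * (a + c)) * f) / ((a + c) * (a + c + f)) := by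
      rw [e3]
      field_simp
    have e1 : b + e * f / (c + f) = (b * (c + f) + e * f) / (c + f) := by
      field_simp
    all_goals try rfl
    all_goals try ring
    all_goals try rw [e2]
    all_goals try rw [e4]
    all_goals try rw [e1]
    all_goals try rw [e3]
    all_goals field_simp
    all_goals ring
  · funext ⟨⟨a,ha⟩,⟨b,hb⟩,⟨c,hc⟩⟩
    simp only [Function.comp, semiAKP, id, Prod.mk.injEq, Subtype.mk.injEq]
    have h1 : a + c ≠ 0 := by positivity
    refine ⟨?_, ?_, ?_⟩ <;>
    · first
      | rfl
      | (field_simp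
         try ring)
  · funext ⟨⟨a,ha⟩,⟨b,hb⟩,⟨c,hc⟩⟩
    simp only [Function.comp, semiAKP, tau13, id, Prod.mk.injEq, Subtype.mk.injEq]
    have h1 : a + c ≠ 0 := by positivity
    refine ⟨?_, ?_, ?_⟩ <;>
    · first
      | rfl
      | (field_simp
         try ring)
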